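/- arXiv:1501.00857 — 2 statements merged into one kernel-verified Lean document; each statement's English description precedes it below -/
import Mathlib

section
/- Let d and N be positive natural numbers, x : Fin N → ℝ^d a family of data points, S a finite subset of Fin N, and T ⊆ S with T nonempty and |T| < |S|. Define the empirical mean over a finite nonempty index set A as μ(A) = (1/|A|) ∑_{i∈A} x_i and the empirical covariance matrix as Σ(A) = (1/|A|) ∑_{i∈A} (x_i − μ(A))(x_i − μ(A))ᵀ, a d×d real matrix formed from outer products. Then Σ(S \ T) = (|S|/(|S|−|T|))·Σ(S) − (|T|/(|S|−|T|))·Σ(T) − (|S|·|T|/(|S|−|T|)²)·(μ(S) − μ(T))(μ(S) − μ(T))ᵀ. -/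
open Matrix

/-- The empirical mean of the data points `x i`, `i ∈ A`: `μ(A) = (1/|A|) ∑_{i∈A} x_i`. -/
noncomputable def empMean {d N : ℕ} (x : Fin N → (Fin d → ℝ)) (A : Finset (Fin N)) :
    Fin d → ℝ :=
  (A.card : ℝ)⁻¹ • ∑ i ∈ A, x i

/-- The empirical covariance matrix of the data points `x i`, `i ∈ A`:
`Σ(A) = (1/|A|) ∑_{i∈A} (x_i − μ(A))(x_i − μ(A))ᵀ`, where `uvᵀ` is the outer product. -/
noncomputable def empCov {d N : ℕ} (x : Fin N → (Fin d → ℝ)) (A : Finset (Fin N)) :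
    Matrix (Fin d) (Fin d) ℝ :=
  (A.card : ℝ)⁻¹ • ∑ i ∈ A, vecMulVec (x i - empMean x A) (x i - empMean x A)

/-!
The raw sums `∑_A xᵢ = |A| μ(A)` and `∑_A xᵢ xᵢᵀ = |A| (Σ(A) + μ(A) μ(A)ᵀ)` are additive in `A`,
so those over `S \ T` are the differences of those over `S` and over `T`. Solving for
`μ(S \ T)` and `Σ(S \ T)`, with `n = |S|`, `m = |T|`, `a = μ(S)`, `b = μ(T)`, leaves the cross
terms `n a aᵀ − m b bᵀ − (n a − m b)(n a − m b)ᵀ / (n − m) = −(n m / (n − m)) (a − b)(a − b)ᵀ`.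
-/

section

open Finset

variable {d N : ℕ} (x : Fin N → (Fin d → ℝ)) (A : Finset (Fin N))

theorem sum_eq_card_smul_empMean : ∑ i ∈ A, x i = (#A : ℝ) • empMean x A := by
  rcases A.eq_empty_or_nonempty with rfl | hA
  · simp
  · have hA0 : (#A : ℝ) ≠ 0 := by exact_mod_cast hA.card_pos.ne'
    rw [empMean, smul_inv_smul₀ hA0]

theorem sum_vecMulVec_self_eq_card_smul :
    ∑ i ∈ A, vecMulVec (x i) (x i) =
      (#A : ℝ) • (empCov x A + vecMulVec (empMean x A) (empMean x A)) := by
  rcases A.eq_empty_or_nonempty with rfl | hA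
  · simp
  have hA0 : (#A : ℝ) ≠ 0 := by exact_mod_cast hA.card_pos.ne'
  have hsum := congrFun (sum_eq_card_smul_empMean x A)
  simp only [Finset.sum_apply, Pi.smul_apply, smul_eq_mul] at hsum
  ext k l
  simp only [empCov, Matrix.smul_apply, Matrix.add_apply, Matrix.sum_apply, vecMulVec_apply,
    Pi.sub_apply, smul_eq_mul, sub_mul, mul_sub, sum_sub_distrib, ← sum_mul, ← mul_sum, hsum,
    sum_const, nsmul_eq_mul]
  field_simp
  ring

end

theorem empCov_update_general (d N : ℕ)
    (x : Fin N → (Fin d → ℝ)) (S T : Finset (Fin N))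
    (hTS : T ⊆ S) (hcard : T.card < S.card) :
    empCov x (S \ T) =
      ((S.card : ℝ) / ((S.card : ℝ) - (T.card : ℝ))) • empCov x S
      - ((T.card : ℝ) / ((S.card : ℝ) - (T.card : ℝ))) • empCov x T
      - (((S.card : ℝ) * (T.card : ℝ)) / ((S.card : ℝ) - (T.card : ℝ)) ^ 2) •
          vecMulVec (empMean x S - empMean x T) (empMean x S - empMean x T) := by
  have hk : ((S \ T).card : ℝ) = S.card - T.card := by
    rw [Finset.card_sdiff_of_subset hTS, Nat.cast_sub (Finset.card_le_card hTS)]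
  have hk0 : (S.card : ℝ) - T.card ≠ 0 := sub_ne_zero.mpr (by exact_mod_cast hcard.ne')
  have hmean : empMean x (S \ T) =
      ((S.card : ℝ) - T.card)⁻¹ • ((S.card : ℝ) • empMean x S - (T.card : ℝ) • empMean x T) := by
    rw [eq_inv_smul_iff₀ hk0, ← hk, ← sum_eq_card_smul_empMean, Finset.sum_sdiff_eq_sub hTS,
      sum_eq_card_smul_empMean, sum_eq_card_smul_empMean]
  have hsecond : ((S.card : ℝ) - T.card) •
      (empCov x (S \ T) + vecMulVec (empMean x (S \ T)) (empMean x (S \ T))) =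
        (S.card : ℝ) • (empCov x S + vecMulVec (empMean x S) (empMean x S))
        - (T.card : ℝ) • (empCov x T + vecMulVec (empMean x T) (empMean x T)) := by
    rw [← hk, ← sum_vecMulVec_self_eq_card_smul, Finset.sum_sdiff_eq_sub hTS,
      sum_vecMulVec_self_eq_card_smul, sum_vecMulVec_self_eq_card_smul]
  rw [hmean] at hsecond
  ext i j
  have hij := congrFun (congrFun hsecond i) j
  simp only [Matrix.sub_apply, Matrix.add_apply, Matrix.smul_apply, vecMulVec_apply,
    Pi.sub_apply, Pi.smul_apply, smul_eq_mul] at hij ⊢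
  field_simp at hij ⊢
  linear_combination hij

/-- Update rule for the empirical covariance matrix when a nonempty subset `T` of the
index set `S` is removed:
`Σ(S \ T) = (|S|/(|S|−|T|))·Σ(S) − (|T|/(|S|−|T|))·Σ(T)
           − (|S|·|T|/(|S|−|T|)²)·(μ(S) − μ(T))(μ(S) − μ(T))ᵀ`. -/
theorem empCov_update (d N : ℕ) (hd : 0 < d) (hN : 0 < N)
    (x : Fin N → (Fin d → ℝ)) (S T : Finset (Fin N))
    (hTS : T ⊆ S) (hT : T.Nonempty) (hcard : T.card < S.card) :
    empCov x (S \ T) =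
      ((S.card : ℝ) / ((S.card : ℝ) - (T.card : ℝ))) • empCov x S
      - ((T.card : ℝ) / ((S.card : ℝ) - (T.card : ℝ))) • empCov x T
      - (((S.card : ℝ) * (T.card : ℝ)) / ((S.card : ℝ) - (T.card : ℝ)) ^ 2) •
          vecMulVec (empMean x S - empMean x T) (empMean x S - empMean x T) :=
  empCov_update_general d N x S T hTS hcard
end

section
/- Let d and N be positive natural numbers, x : Fin N → ℝ^d a family of data points, S a finite subset of Fin N with |S| ≥ 2, and a ∈ S. Define the empirical mean over a finite nonempty index set A as μ(A) = (1/|A|) ∑_{i∈A} x_i and the empirical covariance matrix as Σ(A) = (1/|A|) ∑_{i∈A} (x_i − μ(A))(x_i − μ(A))ᵀ. Then Σ(S \ {a}) = (|S|/(|S|−1))·Σ(S) − (|S|/(|S|−1)²)·(x_a − μ(S))(x_a − μ(S))ᵀ. -/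
open Matrix

/-!
With `n = |S|`, `T = S \ {a}`, `m = μ(S)` and `u = x_a − m`, removing `a` from the scatter
matrix of `S` about `m` leaves the scatter matrix of `T` about `m`. By the parallel-axis
(König–Huygens) identity this is `(n−1)·Σ(T) + (n−1)·(μ(T) − m)(μ(T) − m)ᵀ`, and
`μ(T) − m = −u/(n−1)`. Hence `(n−1)·Σ(T) = n·Σ(S) − uuᵀ − uuᵀ/(n−1) = n·Σ(S) − n/(n−1)·uuᵀ`.
-/

namespace Matrix

variable {ι m n R : Type*} [CommRing R]

theorem sum_vecMulVec (s : Finset ι) (w : ι → m → R) (v : n → R) :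
    ∑ i ∈ s, vecMulVec (w i) v = vecMulVec (∑ i ∈ s, w i) v := by
  ext j k
  simp only [sum_apply, vecMulVec_apply, Finset.sum_apply, Finset.sum_mul]

theorem vecMulVec_sum (s : Finset ι) (w : m → R) (v : ι → n → R) :
    ∑ i ∈ s, vecMulVec w (v i) = vecMulVec w (∑ i ∈ s, v i) := by
  ext j k
  simp only [sum_apply, vecMulVec_apply, Finset.sum_apply, Finset.mul_sum]

theorem sum_vecMulVec_sub_self_eq_add_card_smul (s : Finset ι) (v : ι → n → R)
    {μ : n → R} (hμ : ∑ i ∈ s, v i = (s.card : R) • μ) (c : n → R) :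
    ∑ i ∈ s, vecMulVec (v i - c) (v i - c) =
      ∑ i ∈ s, vecMulVec (v i - μ) (v i - μ) + (s.card : R) • vecMulVec (μ - c) (μ - c) := by
  have hdev : ∑ i ∈ s, (v i - μ) = 0 := by
    rw [Finset.sum_sub_distrib, Finset.sum_const, hμ, Nat.cast_smul_eq_nsmul, sub_self]
  calc ∑ i ∈ s, vecMulVec (v i - c) (v i - c)
      = ∑ i ∈ s, (vecMulVec (v i - μ) (v i - μ) + vecMulVec (v i - μ) (μ - c)
          + vecMulVec (μ - c) (v i - μ) + vecMulVec (μ - c) (μ - c)) := by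
        refine Finset.sum_congr rfl fun i _ => ?_
        rw [show v i - c = (v i - μ) + (μ - c) by abel]
        simp only [add_vecMulVec, vecMulVec_add]
        abel
    _ = _ := by
        simp only [Finset.sum_add_distrib, sum_vecMulVec, vecMulVec_sum, hdev, zero_vecMulVec,
          vecMulVec_zero, Finset.sum_const, Nat.cast_smul_eq_nsmul, add_zero]

end Matrix

section

variable {d N : ℕ} (x : Fin N → (Fin d → ℝ))

theorem card_smul_empMean (A : Finset (Fin N)) :
    (A.card : ℝ) • empMean x A = ∑ i ∈ A, x i := by
  rcases A.eq_empty_or_nonempty with rfl | hA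
  · simp
  · rw [empMean, smul_inv_smul₀ (by exact_mod_cast hA.card_ne_zero)]

theorem card_smul_empCov (A : Finset (Fin N)) :
    (A.card : ℝ) • empCov x A =
      ∑ i ∈ A, vecMulVec (x i - empMean x A) (x i - empMean x A) := by
  rcases A.eq_empty_or_nonempty with rfl | hA
  · simp
  · rw [empCov, smul_inv_smul₀ (by exact_mod_cast hA.card_ne_zero)]

variable {S : Finset (Fin N)} {a : Fin N}

theorem card_erase_smul_empMean_sub (ha : a ∈ S) :
    ((S.erase a).card : ℝ) • (empMean x (S.erase a) - empMean x S) = empMean x S - x a := by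
  have hsum := Finset.add_sum_erase S x ha
  rw [← card_smul_empMean, ← card_smul_empMean, ← Finset.card_erase_add_one ha,
    Nat.cast_add_one, add_smul, one_smul] at hsum
  linear_combination (norm := module) hsum

theorem card_erase_smul_empCov_add (ha : a ∈ S) :
    ((S.erase a).card : ℝ) • empCov x (S.erase a)
      + ((S.erase a).card : ℝ) • vecMulVec (empMean x (S.erase a) - empMean x S)
          (empMean x (S.erase a) - empMean x S)
      + vecMulVec (x a - empMean x S) (x a - empMean x S) = (S.card : ℝ) • empCov x S := by
  rw [card_smul_empCov, card_smul_empCov, ← Finset.add_sum_erase S _ ha,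
    sum_vecMulVec_sub_self_eq_add_card_smul _ _ (card_smul_empMean x _).symm (empMean x S)]
  abel

end

theorem empCov_update_loocv_general (d N : ℕ)
    (x : Fin N → (Fin d → ℝ)) (S : Finset (Fin N)) (a : Fin N)
    (ha : a ∈ S) (hcard : 2 ≤ S.card) :
    empCov x (S \ {a}) =
      ((S.card : ℝ) / ((S.card : ℝ) - 1)) • empCov x S
      - ((S.card : ℝ) / ((S.card : ℝ) - 1) ^ 2) •
          vecMulVec (x a - empMean x S) (x a - empMean x S) := by
  have hn1 : (S.card : ℝ) - 1 ≠ 0 := by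
    have : (2 : ℝ) ≤ S.card := by exact_mod_cast hcard
    linarith
  have hT : ((S.erase a).card : ℝ) = S.card - 1 := by
    rw [Finset.card_erase_of_mem ha, Nat.cast_sub (by omega), Nat.cast_one]
  have hshift : empMean x (S.erase a) - empMean x S
      = ((S.card : ℝ) - 1)⁻¹ • -(x a - empMean x S) := by
    rw [eq_inv_smul_iff₀ hn1, ← hT, card_erase_smul_empMean_sub x ha, neg_sub]
  have hscatter := card_erase_smul_empCov_add x ha
  rw [hshift, hT, vecMulVec_smul, smul_vecMulVec, neg_vecMulVec, vecMulVec_neg, neg_neg,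
    smul_smul, smul_smul] at hscatter
  rw [Finset.sdiff_singleton_eq_erase]
  linear_combination (norm := skip) ((S.card : ℝ) - 1)⁻¹ • hscatter
  match_scalars <;> field_simp <;> ring

/-- Leave-one-out update rule for the empirical covariance matrix when a single element
`a` of the index set `S` is removed:
`Σ(S \ {a}) = (|S|/(|S|−1))·Σ(S) − (|S|/(|S|−1)²)·(x_a − μ(S))(x_a − μ(S))ᵀ`. -/
theorem empCov_update_loocv (d N : ℕ) (hd : 0 < d) (hN : 0 < N)
    (x : Fin N → (Fin d → ℝ)) (S : Finset (Fin N)) (a : Fin N)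
    (ha : a ∈ S) (hcard : 2 ≤ S.card) :
    empCov x (S \ {a}) =
      ((S.card : ℝ) / ((S.card : ℝ) - 1)) • empCov x S
      - ((S.card : ℝ) / ((S.card : ℝ) - 1) ^ 2) •
          vecMulVec (x a - empMean x S) (x a - empMean x S) :=
  empCov_update_loocv_general d N x S a ha hcard
end
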